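/- Let L > 0 and n ∈ ℕ. If 0 < σ₁ < σ₂, and k₁ ∈ (nπ/L, (n+1/2)π/L) satisfies k₁·sin(k₁L) = σ₁·cos(k₁L) while k₂ ∈ (nπ/L, (n+1/2)π/L) satisfies k₂·sin(k₂L) = σ₂·cos(k₂L), then k₁ < k₂. -/

import Mathlib

/-!
On the window, `kL` lies in `(nπ, nπ + π/2)`, where `cos (kL) ≠ 0` and `tan (kL) > 0`, so the
secular equation says exactly `σ = k · tan (kL)`. The right-hand side is a product of two positive
strictly increasing functions of `k`, hence strictly increasing, so a larger `σ` forces a larger root.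
-/

open Real Set

namespace Real

theorem strictMonoOn_tan_Ioo_int_mul_pi (n : ℤ) :
    StrictMonoOn tan (Ioo (n * π - π / 2) (n * π + π / 2)) := by
  intro x hx y hy hxy
  rw [← tan_periodic.sub_int_mul_eq n, ← tan_periodic.sub_int_mul_eq (x := y) n]
  exact strictMonoOn_tan ⟨by linarith [hx.1], by linarith [hx.2]⟩
    ⟨by linarith [hy.1], by linarith [hy.2]⟩ (by linarith)

theorem tan_pos_of_mem_Ioo_int_mul_pi {n : ℤ} {x : ℝ} (hx : x ∈ Ioo (n * π) (n * π + π / 2)) :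
    0 < tan x := by
  have hπ := pi_pos
  simpa only [tan_int_mul_pi] using strictMonoOn_tan_Ioo_int_mul_pi n
    ⟨by linarith, by linarith⟩ ⟨by linarith [hx.1], hx.2⟩ hx.1

/-- Mathlib's `tan x = sin x / cos x` is `0` wherever `cos x = 0`. -/
theorem cos_ne_zero_of_tan_pos {x : ℝ} (hx : 0 < tan x) : cos x ≠ 0 := by
  intro hc
  simp [tan_eq_sin_div_cos, hc] at hx

theorem eq_mul_tan_of_mul_sin_eq_mul_cos {k σ x : ℝ} (hc : cos x ≠ 0)
    (h : k * sin x = σ * cos x) : σ = k * tan x := by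
  rw [tan_eq_sin_div_cos, mul_div_assoc', h, mul_div_cancel_right₀ _ hc]

end Real

abbrev robinWindow (L : ℝ) (n : ℕ) : Set ℝ :=
  Ioo ((n : ℝ) * π / L) (((n : ℝ) + 1 / 2) * π / L)

section RobinWindow

variable {L : ℝ} {n : ℕ} {k : ℝ}

theorem mul_mem_Ioo_of_mem_robinWindow (hL : 0 < L) (hk : k ∈ robinWindow L n) :
    k * L ∈ Ioo ((n : ℤ) * π) ((n : ℤ) * π + π / 2) := by
  obtain ⟨h₁, h₂⟩ := hk
  rw [div_lt_iff₀ hL] at h₁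
  rw [lt_div_iff₀ hL] at h₂
  push_cast
  constructor <;> linarith

theorem tan_mul_pos_of_mem_robinWindow (hL : 0 < L) (hk : k ∈ robinWindow L n) :
    0 < tan (k * L) :=
  tan_pos_of_mem_Ioo_int_mul_pi (mul_mem_Ioo_of_mem_robinWindow hL hk)

theorem pos_of_mem_robinWindow (hL : 0 < L) (hk : k ∈ robinWindow L n) :
    0 < k :=
  lt_of_le_of_lt (by positivity) hk.1

theorem strictMonoOn_mul_tan_robinWindow (hL : 0 < L) :
    StrictMonoOn (fun k ↦ k * tan (k * L)) (robinWindow L n) := by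
  intro a ha b hb hab
  have hbranch : Ioo ((n : ℤ) * π) ((n : ℤ) * π + π / 2) ⊆
      Ioo ((n : ℤ) * π - π / 2) ((n : ℤ) * π + π / 2) :=
    Ioo_subset_Ioo_left (by linarith [pi_pos])
  exact mul_lt_mul'' hab
    (strictMonoOn_tan_Ioo_int_mul_pi n (hbranch (mul_mem_Ioo_of_mem_robinWindow hL ha))
      (hbranch (mul_mem_Ioo_of_mem_robinWindow hL hb)) (mul_lt_mul_of_pos_right hab hL))
    (pos_of_mem_robinWindow hL ha).le (tan_mul_pos_of_mem_robinWindow hL ha).le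

theorem eq_mul_tan_of_mem_robinWindow {σ : ℝ} (hL : 0 < L) (hk : k ∈ robinWindow L n)
    (hsec : k * sin (k * L) = σ * cos (k * L)) : σ = k * tan (k * L) :=
  eq_mul_tan_of_mul_sin_eq_mul_cos (cos_ne_zero_of_tan_pos (tan_mul_pos_of_mem_robinWindow hL hk))
    hsec

end RobinWindow

theorem robin_branch_monotone_general (L : ℝ) (hL : 0 < L) (n : ℕ)
    (σ₁ σ₂ k₁ k₂ : ℝ) (hσ₁₂ : σ₁ < σ₂)
    (hk₁ : k₁ ∈ Set.Ioo ((n : ℝ) * π / L) (((n : ℝ) + 1 / 2) * π / L))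
    (hsec₁ : k₁ * Real.sin (k₁ * L) = σ₁ * Real.cos (k₁ * L))
    (hk₂ : k₂ ∈ Set.Ioo ((n : ℝ) * π / L) (((n : ℝ) + 1 / 2) * π / L))
    (hsec₂ : k₂ * Real.sin (k₂ * L) = σ₂ * Real.cos (k₂ * L)) :
    k₁ < k₂ := by
  rw [← (strictMonoOn_mul_tan_robinWindow hL).lt_iff_lt hk₁ hk₂,
    ← eq_mul_tan_of_mem_robinWindow hL hk₁ hsec₁, ← eq_mul_tan_of_mem_robinWindow hL hk₂ hsec₂]
  exact hσ₁₂

/-- Strict monotonicity of the Robin eigenvalue branch in the coupling strength: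
in each window `(nπ/L, (n+1/2)π/L)`, larger `σ` gives a larger secular root. -/
theorem robin_branch_monotone (L : ℝ) (hL : 0 < L) (n : ℕ)
    (σ₁ σ₂ k₁ k₂ : ℝ) (hσ₁ : 0 < σ₁) (hσ₁₂ : σ₁ < σ₂)
    (hk₁ : k₁ ∈ Set.Ioo ((n : ℝ) * π / L) (((n : ℝ) + 1 / 2) * π / L))
    (hsec₁ : k₁ * Real.sin (k₁ * L) = σ₁ * Real.cos (k₁ * L))
    (hk₂ : k₂ ∈ Set.Ioo ((n : ℝ) * π / L) (((n : ℝ) + 1 / 2) * π / L))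
    (hsec₂ : k₂ * Real.sin (k₂ * L) = σ₂ * Real.cos (k₂ * L)) :
    k₁ < k₂ :=
  robin_branch_monotone_general L hL n σ₁ σ₂ k₁ k₂ hσ₁₂ hk₁ hsec₁ hk₂ hsec₂
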